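/- For any Shapley-Scarf market (with arbitrary weak preferences) and any tie-breaking profile ≻, the allocation TTC_≻(R) is in the weak core; in particular the weak core of any such market is non-empty. -/

import Mathlib

open scoped Classical

namespace ShapleyScarf

/-- A weak preference relation: complete (total) and transitive, hence reflexive. -/
structure WeakOrder (H : Type*) where
  rel : H → H → Prop
  total : ∀ a b, rel a b ∨ rel b a
  trans : ∀ a b c, rel a b → rel b c → rel a c

namespace WeakOrder
variable {H : Type*}
/-- Strict part `P` of a weak preference. -/
def P (R : WeakOrder H) (a b : H) : Prop := R.rel a b ∧ ¬ R.rel b a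
/-- Indifference part `I` of a weak preference. -/
def I (R : WeakOrder H) (a b : H) : Prop := R.rel a b ∧ R.rel b a
end WeakOrder

/-- `lt` is a strict linear order on agents (a tie-breaking order). -/
def IsTieBreak {n : ℕ} (lt : Fin n → Fin n → Prop) : Prop :=
  (∀ a b, a ≠ b → lt a b ∨ lt b a) ∧ Transitive lt ∧ ∀ a, ¬ lt a a

section Defs
variable {n : ℕ} {H : Type*} {B : Type*}

/-- Strict part of the tie-broken preference `P_{i,≻}`: `a` above `b` iff
`a P b`, or `a I b` and the owner of `a` comes before the owner of `b` in `≻_i`. -/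
def tieBroken (w : Fin n ≃ H) (R : WeakOrder H) (lt : Fin n → Fin n → Prop) (a b : H) : Prop :=
  R.P a b ∨ (R.I a b ∧ lt (w.symm a) (w.symm b))

/-- The weak tie-broken relation `R_{i,≻}` (reflexive closure of the strict part). -/
def tieBrokenWeak (w : Fin n ≃ H) (R : WeakOrder H) (lt : Fin n → Fin n → Prop)
    (a b : H) : Prop :=
  a = b ∨ tieBroken w R lt a b

/-- The owner (in `S`) of the `pref`-best house among the endowments of the
remaining agents `S`; the agent with this endowment is whom `i` points at. -/
noncomputable def point (w : Fin n ≃ H) (pref : H → H → Prop) (S : Finset (Fin n))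
    (i : Fin n) : Fin n :=
  if h : (S.filter fun m => ∀ j ∈ S, j = m ∨ pref (w m) (w j)).Nonempty then
    (S.filter fun m => ∀ j ∈ S, j = m ∨ pref (w m) (w j)).min' h
  else i

/-- The agents of `S` lying on some trading cycle of the pointing map. -/
noncomputable def cycleAgents (w : Fin n ≃ H) (pref : Fin n → H → H → Prop)
    (S : Finset (Fin n)) : Finset (Fin n) :=
  S.filter fun i => ∃ k, 0 < k ∧ (fun j => point w (pref j) S j)^[k] i = i

/-- Top trading cycles on strict preferences, fuel-based recursion: in each round all
current trading cycles are executed and their agents removed. -/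
noncomputable def TTCaux (w : Fin n ≃ H) (pref : Fin n → H → H → Prop) :
    ℕ → Finset (Fin n) → Fin n → H
  | 0, _, i => w i
  | fuel + 1, S, i =>
      if i ∈ cycleAgents w pref S then w (point w (pref i) S i)
      else TTCaux w pref fuel (S \ cycleAgents w pref S) i

/-- Gale's top trading cycles algorithm for a strict preference profile. -/
noncomputable def TTCstrict (w : Fin n ≃ H) (pref : Fin n → H → H → Prop) : Fin n → H :=
  TTCaux w pref n Finset.univ

/-- Round (executed-cycle index, starting from 1) at which an agent is assigned. -/
noncomputable def TTCroundAux (w : Fin n ≃ H) (pref : Fin n → H → H → Prop) :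
    ℕ → Finset (Fin n) → Fin n → ℕ
  | 0, _, _ => 1
  | fuel + 1, S, i =>
      if i ∈ cycleAgents w pref S then 1
      else TTCroundAux w pref fuel (S \ cycleAgents w pref S) i + 1

/-- TTC with fixed tie-breaking: `TTC_≻(R) = TTC(R_≻)`. -/
noncomputable def TTCtb (w : Fin n ≃ H) (R : Fin n → WeakOrder H)
    (tb : Fin n → Fin n → Fin n → Prop) : Fin n → H :=
  TTCstrict w fun i => tieBroken w (R i) (tb i)

/-- The round in which agent `i` is assigned under `TTC_≻(R)`. -/
noncomputable def TTCtbRound (w : Fin n ≃ H) (R : Fin n → WeakOrder H)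
    (tb : Fin n → Fin n → Fin n → Prop) (i : Fin n) : ℕ :=
  TTCroundAux w (fun a => tieBroken w (R a) (tb a)) n Finset.univ i

/-- Objective indifferences w.r.t. the partition of `H` into the fibers of `blk`:
indifference holds exactly between houses in the same block. -/
def ObjInd (blk : H → B) (R : WeakOrder H) : Prop :=
  ∀ a b, R.I a b ↔ blk a = blk b

/-- `x` is blocked: some coalition `Q` can reallocate its own endowments making
all its members weakly better off and one strictly better off. -/
def Blocks (w : Fin n ≃ H) (R : Fin n → WeakOrder H) (x : Fin n → H) : Prop :=
  ∃ (Q : Finset (Fin n)) (y : Fin n ≃ H),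
    Q.image (⇑y) = Q.image (⇑w) ∧
    (∀ i ∈ Q, (R i).rel (y i) (x i)) ∧
    ∃ i ∈ Q, (R i).P (y i) (x i)

/-- `x` is weakly blocked: some nonempty coalition can reallocate its own
endowments making all of its members strictly better off. -/
def WeaklyBlocks (w : Fin n ≃ H) (R : Fin n → WeakOrder H) (x : Fin n → H) : Prop :=
  ∃ Q : Finset (Fin n), Q.Nonempty ∧ ∃ y : Fin n ≃ H,
    Q.image (⇑y) = Q.image (⇑w) ∧ ∀ i ∈ Q, (R i).P (y i) (x i)

/-- `y` Pareto dominates `x`. -/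
def ParetoDom (R : Fin n → WeakOrder H) (y x : Fin n → H) : Prop :=
  (∀ i, (R i).rel (y i) (x i)) ∧ ∃ i, (R i).P (y i) (x i)

end Defs

/-!
Let `Q` be a nonempty coalition and `y` a reallocation of its endowments. Consider the first
round of TTC in which some member `i` of `Q` trades. All endowments of `Q` are still on the
market then, so `i` receives her favourite among them under the tie-broken preference; in
particular `y i` is not tie-broken better for `i`, hence not strictly better under `R i`.
Bijectivity holds because each round hands every agent on a trading cycle the endowment of her
successor, and the pointing map permutes its periodic points.
-/

theorem _root_.Function.periodicPts_nonempty {α : Type*} [Finite α] [Nonempty α]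
    (f : α → α) : (Function.periodicPts f).Nonempty := by
  obtain ⟨x⟩ := ‹Nonempty α›
  obtain ⟨a, b, hab, heq⟩ := Finite.exists_ne_map_eq_of_infinite fun k : ℕ => f^[k] x
  wlog hlt : a < b generalizing a b
  · exact this b a hab.symm heq.symm (hab.lt_or_gt.resolve_left hlt)
  refine ⟨f^[a] x, b - a, Nat.sub_pos_of_lt hlt, ?_⟩
  change f^[b - a] (f^[a] x) = f^[a] x
  rw [← Function.iterate_add_apply, Nat.sub_add_cancel hlt.le, heq]

section StrictTTC
variable {n : ℕ} {H : Type*}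

lemma point_spec (w : Fin n ≃ H) (p : H → H → Prop) [IsStrictTotalOrder H p]
    {S : Finset (Fin n)} (hS : S.Nonempty) (i : Fin n) :
    point w p S i ∈ S ∧ ∀ j ∈ S, ¬ p (w j) (w (point w p S i)) := by
  let _ := linearOrderOfSTO p
  obtain ⟨m, hm, hmin⟩ := S.exists_min_image w hS
  have hne : (S.filter fun m => ∀ j ∈ S, j = m ∨ p (w m) (w j)).Nonempty :=
    ⟨m, Finset.mem_filter.2
      ⟨hm, fun j hj => (hmin j hj).imp (fun h => w.injective h.symm) id⟩⟩
  have hbest := Finset.mem_filter.1 (Finset.min'_mem _ hne)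
  rw [point, dif_pos hne]
  refine ⟨hbest.1, fun j hj hp => ?_⟩
  rcases hbest.2 j hj with rfl | hp'
  · exact irrefl _ hp
  · exact asymm hp hp'

noncomputable def pointMap (w : Fin n ≃ H) (pref : Fin n → H → H → Prop)
    (S : Finset (Fin n)) : Fin n → Fin n :=
  fun j => point w (pref j) S j

variable (w : Fin n ≃ H) (pref : Fin n → H → H → Prop)

lemma cycleAgents_subset (S : Finset (Fin n)) : cycleAgents w pref S ⊆ S :=
  Finset.filter_subset _ _

lemma TTCaux_succ_of_mem {fuel : ℕ} {S : Finset (Fin n)} {i : Fin n}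
    (hi : i ∈ cycleAgents w pref S) :
    TTCaux w pref (fuel + 1) S i = w (pointMap w pref S i) :=
  if_pos hi

lemma TTCaux_succ_of_notMem {fuel : ℕ} {S : Finset (Fin n)} {i : Fin n}
    (hi : i ∉ cycleAgents w pref S) :
    TTCaux w pref (fuel + 1) S i = TTCaux w pref fuel (S \ cycleAgents w pref S) i :=
  if_neg hi

variable [∀ i, IsStrictTotalOrder H (pref i)]

lemma periodicPts_pointMap_subset {S : Finset (Fin n)} (hS : S.Nonempty) :
    Function.periodicPts (pointMap w pref S) ⊆ S := by
  rintro x ⟨k, hk, hx⟩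
  rw [← hx.eq, ← Nat.sub_add_cancel hk, Function.iterate_succ_apply']
  exact (point_spec w _ hS _).1

lemma coe_cycleAgents {S : Finset (Fin n)} (hS : S.Nonempty) :
    (cycleAgents w pref S : Set (Fin n)) = Function.periodicPts (pointMap w pref S) := by
  ext x
  simp only [cycleAgents, Finset.coe_filter, Set.mem_ofPred_eq]
  exact ⟨fun h => h.2, fun h => ⟨periodicPts_pointMap_subset w pref hS h, h⟩⟩

lemma cycleAgents_nonempty {S : Finset (Fin n)} (hS : S.Nonempty) :
    (cycleAgents w pref S).Nonempty := by
  have : Nonempty (Fin n) := ⟨hS.choose⟩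
  rw [← Finset.coe_nonempty, coe_cycleAgents w pref hS]
  exact Function.periodicPts_nonempty _

lemma image_pointMap_cycleAgents {S : Finset (Fin n)} (hS : S.Nonempty) :
    (cycleAgents w pref S).image (pointMap w pref S) = cycleAgents w pref S := by
  apply Finset.coe_injective
  rw [Finset.coe_image, coe_cycleAgents w pref hS]
  exact (Function.bijOn_periodicPts _).image_eq

lemma card_sdiff_cycleAgents_lt {S : Finset (Fin n)} (hS : S.Nonempty) :
    (S \ cycleAgents w pref S).card < S.card :=
  Finset.card_lt_card <|
    Finset.sdiff_ssubset (cycleAgents_subset w pref S) (cycleAgents_nonempty w pref hS)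

lemma image_TTCaux {fuel : ℕ} {S : Finset (Fin n)} (hfuel : S.card ≤ fuel) :
    S.image (TTCaux w pref fuel S) = S.image w := by
  induction fuel generalizing S with
  | zero => simp [Finset.card_eq_zero.1 (Nat.le_zero.1 hfuel)]
  | succ fuel ih =>
    rcases S.eq_empty_or_nonempty with rfl | hS
    · simp
    have hcycle : (cycleAgents w pref S).image (TTCaux w pref (fuel + 1) S)
        = (cycleAgents w pref S).image w := by
      rw [Finset.image_congr fun i hi => TTCaux_succ_of_mem w pref hi]
      have hperm := congrArg (Finset.image w) (image_pointMap_cycleAgents w pref hS)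
      rw [Finset.image_image] at hperm
      exact hperm
    have hrest : (S \ cycleAgents w pref S).image (TTCaux w pref (fuel + 1) S)
        = (S \ cycleAgents w pref S).image w := by
      rw [Finset.image_congr fun i hi => TTCaux_succ_of_notMem w pref (Finset.mem_sdiff.1 hi).2]
      exact ih (by have := card_sdiff_cycleAgents_lt w pref hS; omega)
    have hunion := congrArg₂ (· ∪ ·) hcycle hrest
    rwa [← Finset.image_union, ← Finset.image_union,
      Finset.union_sdiff_of_subset (cycleAgents_subset w pref S)] at hunion

lemma exists_mem_forall_not_pref_TTCaux {fuel : ℕ} {S Q : Finset (Fin n)}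
    (hfuel : S.card ≤ fuel) (hQS : Q ⊆ S) (hQ : Q.Nonempty) :
    ∃ i ∈ Q, ∀ j ∈ Q, ¬ pref i (w j) (TTCaux w pref fuel S i) := by
  induction fuel generalizing S with
  | zero =>
    rw [Finset.card_eq_zero.1 (Nat.le_zero.1 hfuel), Finset.subset_empty] at hQS
    exact absurd hQS hQ.ne_empty
  | succ fuel ih =>
    have hS : S.Nonempty := hQ.mono hQS
    by_cases htrade : ∃ i ∈ Q, i ∈ cycleAgents w pref S
    · obtain ⟨i, hiQ, hiC⟩ := htrade
      refine ⟨i, hiQ, fun j hj => ?_⟩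
      rw [TTCaux_succ_of_mem w pref hiC]
      exact (point_spec w _ hS i).2 j (hQS hj)
    · push Not at htrade
      obtain ⟨i, hiQ, hbest⟩ := ih (S := S \ cycleAgents w pref S)
        (by have := card_sdiff_cycleAgents_lt w pref hS; omega)
        (fun j hj => Finset.mem_sdiff.2 ⟨hQS hj, htrade j hj⟩)
      exact ⟨i, hiQ, by rwa [TTCaux_succ_of_notMem w pref (htrade i hiQ)]⟩

theorem TTCstrict_bijective : Function.Bijective (TTCstrict w pref) := by
  have hsurj : Function.Surjective (TTCstrict w pref) := fun h => by
    have hh : h ∈ Finset.univ.image (TTCstrict w pref) := by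
      rw [TTCstrict, image_TTCaux w pref (by simp)]
      exact Finset.mem_image.2 ⟨w.symm h, Finset.mem_univ _, w.apply_symm_apply h⟩
    obtain ⟨i, -, hi⟩ := Finset.mem_image.1 hh
    exact ⟨i, hi⟩
  exact ⟨hsurj.injective_of_finite w, hsurj⟩

theorem exists_mem_not_pref_TTCstrict {Q : Finset (Fin n)} (hQ : Q.Nonempty) {y : Fin n → H}
    (hy : Q.image y ⊆ Q.image w) : ∃ i ∈ Q, ¬ pref i (y i) (TTCstrict w pref i) := by
  obtain ⟨i, hiQ, hbest⟩ :=
    exists_mem_forall_not_pref_TTCaux w pref (Finset.card_fin n).le (Finset.subset_univ Q) hQ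
  obtain ⟨j, hjQ, hj⟩ := Finset.mem_image.1 (hy (Finset.mem_image_of_mem y hiQ))
  exact ⟨i, hiQ, hj ▸ hbest j hjQ⟩

end StrictTTC

theorem isStrictTotalOrder_tieBroken {n : ℕ} {H : Type*} (w : Fin n ≃ H) (R : WeakOrder H)
    {lt : Fin n → Fin n → Prop} (hlt : IsTieBreak lt) :
    IsStrictTotalOrder H (tieBroken w R lt) := by
  obtain ⟨htot, htrans, hirrefl⟩ := hlt
  refine { trichotomous := fun a b hab hba => ?_, irrefl := ?_, trans := ?_ }
  · by_contra hne
    have hI : R.I a b := by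
      constructor <;> by_contra h
      · exact hba (Or.inl ⟨(R.total a b).resolve_left h, h⟩)
      · exact hab (Or.inl ⟨(R.total b a).resolve_left h, h⟩)
    rcases htot _ _ (w.symm.injective.ne hne) with hl | hl
    · exact hab (Or.inr ⟨hI, hl⟩)
    · exact hba (Or.inr ⟨⟨hI.2, hI.1⟩, hl⟩)
  · rintro a (⟨h, h'⟩ | ⟨-, h⟩)
    · exact h' h
    · exact hirrefl _ h
  · rintro a b c (⟨h1, h2⟩ | ⟨⟨h1, h2⟩, hl1⟩) (⟨h3, h4⟩ | ⟨⟨h3, h4⟩, hl2⟩)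
    · exact Or.inl ⟨R.trans _ _ _ h1 h3, fun h => h2 (R.trans _ _ _ h3 h)⟩
    · exact Or.inl ⟨R.trans _ _ _ h1 h3, fun h => h2 (R.trans _ _ _ h3 h)⟩
    · exact Or.inl ⟨R.trans _ _ _ h1 h3, fun h => h4 (R.trans _ _ _ h h1)⟩
    · exact Or.inr ⟨⟨R.trans _ _ _ h1 h3, R.trans _ _ _ h4 h2⟩, htrans hl1 hl2⟩

/-- for any market and tie-breaking profile, `TTC_≻(R)` is in the weak
core; in particular the weak core is non-empty. -/
theorem TTCtb_in_weakCore {n : ℕ} {H : Type*} (w : Fin n ≃ H)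
    (R : Fin n → WeakOrder H) (tb : Fin n → Fin n → Fin n → Prop)
    (htb : ∀ i, IsTieBreak (tb i)) :
    (Function.Bijective (TTCtb w R tb) ∧ ¬ WeaklyBlocks w R (TTCtb w R tb)) ∧
    ∃ x : Fin n ≃ H, ¬ WeaklyBlocks w R ⇑x := by
  let pref := fun i => tieBroken w (R i) (tb i)
  have _ : ∀ i, IsStrictTotalOrder H (pref i) := fun i =>
    isStrictTotalOrder_tieBroken w (R i) (htb i)
  have hbij : Function.Bijective (TTCtb w R tb) := TTCstrict_bijective w pref
  have hcore : ¬ WeaklyBlocks w R (TTCtb w R tb) := by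
    rintro ⟨Q, hQ, y, hy, hP⟩
    obtain ⟨i, hiQ, hnot⟩ := exists_mem_not_pref_TTCstrict w pref hQ hy.subset
    exact hnot (Or.inl (hP i hiQ))
  exact ⟨⟨hbij, hcore⟩, Equiv.ofBijective _ hbij, hcore⟩

end ShapleyScarf
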